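/- arXiv:2108.07082 — 2 statements merged into one kernel-verified Lean document; each statement's English description precedes it below -/
import Mathlib

section
/- For each fixed δ ∈ (0,1), the function ε ↦ δ(1−δ²)²/(ε(1−δε)²) tends to +∞ as ε → 0⁺. Consequently the supremum over z,w ∈ H of |K_H(w,z)|/K_H(z,z) is infinite, i.e., the Hartogs triangle does not satisfy property BR. -/
open Complex Filter Set

/-- The Hartogs triangle. -/
def HT : Set (ℂ × ℂ) := {z | ‖z.2‖ < ‖z.1‖ ∧ ‖z.1‖ < 1}

/-- The Bergman kernel of the Hartogs triangle. -/
noncomputable def KH (w z : ℂ × ℂ) : ℂ :=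
  w.1 * (starRingEnd ℂ) z.1 /
    ((Real.pi : ℂ) ^ 2 * (w.1 * (starRingEnd ℂ) z.1 - w.2 * (starRingEnd ℂ) z.2) ^ 2 *
      (1 - w.1 * (starRingEnd ℂ) z.1) ^ 2)

/-! On the real slice `z = (δ, 0)`, `w = (ε, 0)` the kernel is `(π² εδ (1 - εδ)²)⁻¹`, so the ratio
`|K(w, z)| / K(z, z)` is exactly `δ(1 - δ²)² / (ε(1 - δε)²)`, which blows up like `1/ε` as `ε → 0⁺`. -/

lemma div_mul_sq_mul_eq_inv {K : Type*} [Field K] (x c d : K) :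
    x / (c * x ^ 2 * d) = (c * x * d)⁻¹ := by
  rcases eq_or_ne x 0 with rfl | hx
  · simp
  · rw [sq, ← mul_assoc, mul_right_comm c x x, mul_right_comm _ x d, div_mul_cancel_right₀ hx]

lemma tendsto_div_mul_one_sub_mul_sq_nhdsGT_zero {C : ℝ} (hC : 0 < C) (a : ℝ) :
    Tendsto (fun ε : ℝ => C / (ε * (1 - a * ε) ^ 2)) (nhdsWithin 0 (Ioi 0)) atTop := by
  have hcoeff : Tendsto (fun ε : ℝ => C / (1 - a * ε) ^ 2) (nhdsWithin 0 (Ioi 0)) (nhds C) := by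
    have : ContinuousAt (fun ε : ℝ => C / (1 - a * ε) ^ 2) 0 := by
      refine ContinuousAt.div continuousAt_const (by fun_prop) ?_
      simp
    simpa using this.tendsto.mono_left nhdsWithin_le_nhds
  refine (hcoeff.pos_mul_atTop hC tendsto_inv_nhdsGT_zero).congr fun ε => ?_
  rw [← div_eq_mul_inv, div_div, mul_comm]

lemma ofReal_zero_mem_HT {a : ℝ} (ha0 : 0 < a) (ha1 : a < 1) : ((a : ℂ), (0 : ℂ)) ∈ HT := by
  simp [HT, abs_of_pos ha0, ha0, ha1]

lemma KH_ofReal_zero (a b : ℝ) :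
    KH ((a : ℂ), 0) ((b : ℂ), 0) = ((Real.pi ^ 2 * (a * b) * (1 - a * b) ^ 2)⁻¹ : ℝ) := by
  simp only [KH, conj_ofReal, map_zero, mul_zero, sub_zero, div_mul_sq_mul_eq_inv]
  push_cast
  rfl

lemma norm_KH_div_re_KH_ofReal_zero {ε δ : ℝ} (hε : 0 < ε) (hδ : 0 < δ) :
    ‖KH ((ε : ℂ), 0) ((δ : ℂ), 0)‖ / (KH ((δ : ℂ), 0) ((δ : ℂ), 0)).re =
      δ * (1 - δ ^ 2) ^ 2 / (ε * (1 - δ * ε) ^ 2) := by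
  rw [KH_ofReal_zero, KH_ofReal_zero, norm_real, Real.norm_of_nonneg (by positivity), ofReal_re,
    div_inv_eq_mul, inv_mul_eq_div, mul_comm ε δ, ← sq δ, mul_assoc, mul_assoc,
    mul_div_mul_left _ _ (by positivity), sq δ, mul_assoc, mul_assoc, mul_div_mul_left _ _ hδ.ne']

theorem stmt1 (δ : ℝ) (hδ0 : 0 < δ) (hδ1 : δ < 1) :
    Tendsto (fun ε : ℝ => δ * (1 - δ ^ 2) ^ 2 / (ε * (1 - δ * ε) ^ 2))
        (nhdsWithin 0 (Set.Ioi 0)) atTop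
      ∧ ¬ BddAbove {r : ℝ | ∃ z ∈ HT, ∃ w ∈ HT, r = ‖KH w z‖ / (KH z z).re} := by
  have hδ2 : 0 < 1 - δ ^ 2 := by nlinarith
  have hlim := tendsto_div_mul_one_sub_mul_sq_nhdsGT_zero
    (by positivity : 0 < δ * (1 - δ ^ 2) ^ 2) δ
  refine ⟨hlim, not_bddAbove_iff.2 fun M => ?_⟩
  obtain ⟨ε, hM, hε0, hε1⟩ :=
    ((hlim.eventually_gt_atTop M).and (Ioo_mem_nhdsGT one_pos)).exists
  exact ⟨_, ⟨_, ofReal_zero_mem_HT hδ0 hδ1, _, ofReal_zero_mem_HT hε0 hε1,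
    (norm_KH_div_re_KH_ofReal_zero hε0 hδ0).symm⟩, hM⟩
end

section
/- Let f(z) = 1/z₁ on the Hartogs triangle H and k_z^H the normalized Bergman kernel. Then ⟨f, k_{(1/j,0)}^H⟩ has absolute value π(1 − j^{−2}) for integers j ≥ 2, which converges to π ≠ 0 as j → ∞; hence the sequence of normalized kernels {k_{(1/j,0)}^H} does not converge weakly to 0 in A²(H). -/
open Complex MeasureTheory Filter

/-- The pairing of `f(z) = 1/z₁` with the normalized Bergman kernel at `(1/j, 0)`. -/
noncomputable def pairing (j : ℕ) : ℂ :=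
  ∫ z in HT, (z.1)⁻¹ * (starRingEnd ℂ)
    (KH z ((1 / (j : ℂ)), 0)
      / ((Real.sqrt ((KH ((1 / (j : ℂ)), 0) ((1 / (j : ℂ)), 0)).re) : ℝ) : ℂ))

/-!
The integrand of `pairing j` depends on `z` only through `z₁`, and the fibre of `HT` over `z₁` is
the disc of radius `‖z₁‖`, of area `π ‖z₁‖²`. With `a = 1/j` the factor `‖z₁‖²` cancels the
singularity `1/(z₁ conj z₁)` of the integrand, leaving `(1 - a²)` times the conjugate of the
holomorphic function `(1 - a z₁)⁻²` integrated over the unit disc. By the area mean value property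
that integral is `π` times the value `1` at the origin, so `pairing j = π (1 - 1/j²)`, a sequence
tending to `π ≠ 0`.
-/

open Metric Set
open scoped Real ComplexConjugate

theorem MeasureTheory.Measure.map_fst_restrict_prod_eq_withDensity {α β : Type*}
    [MeasurableSpace α] [MeasurableSpace β] (μ : Measure α) (ν : Measure β) [SFinite ν]
    {s : Set (α × β)} (hs : MeasurableSet s) :
    ((μ.prod ν).restrict s).map Prod.fst = μ.withDensity fun x => ν (Prod.mk x ⁻¹' s) := by
  ext t ht
  rw [Measure.map_apply measurable_fst ht, Measure.restrict_apply (measurable_fst ht),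
    Measure.prod_apply (measurable_fst ht |>.inter hs), withDensity_apply _ ht,
    ← lintegral_indicator ht]
  congr 1 with x
  by_cases hx : x ∈ t <;> simp [hx, Set.preimage, Set.indicator]

section PolarCoordinates

variable {E : Type*} [NormedAddCommGroup E] [NormedSpace ℝ E]

theorem Complex.polarCoord_symm_eq_circleMap (p : ℝ × ℝ) :
    Complex.polarCoord.symm p = circleMap 0 p.1 p.2 := by
  rw [Complex.polarCoord_symm_apply, circleMap_zero, Complex.exp_mul_I]
  push_cast
  ring

theorem setIntegral_Ioo_neg_pi_pi_circleMap (f : ℂ → E) (r : ℝ) :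
    ∫ θ in Ioo (-π) π, f (circleMap 0 r θ) = (2 * π) • Real.circleAverage f 0 r := by
  have hperiodic := ((periodic_circleMap 0 r).comp f).intervalIntegral_add_eq (-π) 0
  rw [Real.circleAverage_def, smul_inv_smul₀ (by positivity), ← integral_Ioc_eq_integral_Ioo,
    ← intervalIntegral.integral_of_le (by linarith [Real.pi_pos])]
  simpa [show -π + 2 * π = π by ring] using hperiodic

theorem setIntegral_ball_eq_integral_circleAverage {f : ℂ → E} {R : ℝ}
    (hf : ContinuousOn f (closedBall 0 R)) :
    ∫ z in ball (0 : ℂ) R, f z = ∫ r in Ioo 0 R, (2 * π * r) • Real.circleAverage f 0 r := by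
  set g : ℝ × ℝ → E := fun p => p.1 • f (circleMap 0 p.1 p.2)
  have hrect : Complex.polarCoord.target ∩ (Iio R ×ˢ univ) = Ioo 0 R ×ˢ Ioo (-π) π := by
    rw [Complex.polarCoord_target, prod_inter_prod, Ioi_inter_Iio, inter_univ]
  have hg : IntegrableOn g (Ioo 0 R ×ˢ Ioo (-π) π) := by
    refine (ContinuousOn.integrableOn_compact (isCompact_Icc.prod isCompact_Icc) ?_).mono_set
      (prod_mono Ioo_subset_Icc_self Ioo_subset_Icc_self)
    refine continuousOn_fst.smul (hf.comp (by fun_prop) fun p hp => ?_)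
    simpa [abs_of_nonneg hp.1.1] using hp.1.2
  calc ∫ z in ball (0 : ℂ) R, f z
      = ∫ p in Complex.polarCoord.target, (Iio R ×ˢ univ).indicator g p := by
        rw [← integral_indicator measurableSet_ball, ← Complex.integral_comp_polarCoord_symm]
        refine setIntegral_congr_fun Complex.polarCoord.open_target.measurableSet fun p hp => ?_
        have hp1 : 0 < p.1 := hp.1
        rw [Complex.polarCoord_symm_eq_circleMap]
        by_cases hpR : p.1 < R <;> simp [g, indicator, hpR, abs_of_pos hp1]
    _ = ∫ r in Ioo 0 R, ∫ θ in Ioo (-π) π, g (r, θ) := by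
        rw [setIntegral_indicator (measurableSet_Iio.prod MeasurableSet.univ), hrect,
          Measure.volume_eq_prod, setIntegral_prod _ hg]
    _ = ∫ r in Ioo 0 R, (2 * π * r) • Real.circleAverage f 0 r := by
        refine setIntegral_congr_fun measurableSet_Ioo fun r _ => ?_
        simp only [g, integral_smul, setIntegral_Ioo_neg_pi_pi_circleMap, smul_smul, mul_comm r]

end PolarCoordinates

theorem DiffContOnCl.setIntegral_ball_zero {E : Type*} [NormedAddCommGroup E] [NormedSpace ℂ E]
    [CompleteSpace E] {f : ℂ → E} {R : ℝ} (hf : DiffContOnCl ℂ f (ball 0 R)) (hR : 0 ≤ R) :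
    ∫ z in ball (0 : ℂ) R, f z = (π * R ^ 2) • f 0 := by
  have hmean : ∀ r ∈ Ioo 0 R, (2 * π * r) • Real.circleAverage f 0 r = (2 * π * r) • f 0 :=
    fun r hr => by
      rw [(hf.mono (ball_subset_ball _)).circleAverage]
      exact (abs_of_pos hr.1).le.trans hr.2.le
  rw [setIntegral_ball_eq_integral_circleAverage hf.continuousOn_ball,
    setIntegral_congr_fun measurableSet_Ioo hmean, integral_smul_const,
    ← integral_Ioc_eq_integral_Ioo, ← intervalIntegral.integral_of_le hR,
    intervalIntegral.integral_const_mul, integral_id]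
  congr 1
  ring

theorem differentiableOn_inv_one_sub_mul_sq {a : ℂ} (ha : ‖a‖ < 1) :
    DifferentiableOn ℂ (fun x => ((1 - a * x) ^ 2)⁻¹) (closedBall 0 1) := by
  intro x hx
  have hax : ‖a * x‖ < 1 := by
    rw [norm_mul]
    exact (mul_le_of_le_one_right (norm_nonneg a) (mem_closedBall_zero_iff.mp hx)).trans_lt ha
  have hne : 1 - a * x ≠ 0 := sub_ne_zero.mpr fun h => by simp [← h] at hax
  exact DifferentiableAt.differentiableWithinAt (by fun_prop (disch := exact pow_ne_zero 2 hne))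

theorem setIntegral_ball_inv_one_sub_mul_sq {a : ℂ} (ha : ‖a‖ < 1) :
    ∫ x in ball (0 : ℂ) 1, ((1 - a * x) ^ 2)⁻¹ = (π : ℂ) := by
  rw [((differentiableOn_inv_one_sub_mul_sq ha).mono
    (closure_ball (0 : ℂ) one_ne_zero).subset).diffContOnCl.setIntegral_ball_zero zero_le_one]
  simp

theorem measurableSet_HT : MeasurableSet HT :=
  (measurableSet_lt (f := fun z : ℂ × ℂ => ‖z.2‖) (by fun_prop) (by fun_prop)).inter
    (measurableSet_lt (f := fun z : ℂ × ℂ => ‖z.1‖) (by fun_prop) measurable_const)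

theorem map_fst_restrict_HT :
    (volume.restrict HT).map Prod.fst =
      (volume.restrict (ball (0 : ℂ) 1)).withDensity fun x => (NNReal.pi * ‖x‖₊ ^ 2 : NNReal) := by
  rw [← withDensity_indicator measurableSet_ball, Measure.volume_eq_prod,
    Measure.map_fst_restrict_prod_eq_withDensity _ _ measurableSet_HT]
  congr 1 with x
  by_cases hx : ‖x‖ < 1
  · have hslice : Prod.mk x ⁻¹' HT = ball 0 ‖x‖ := by ext y; simp [HT, hx]
    simp [hslice, hx, Complex.volume_ball, mul_comm, enorm_eq_nnnorm]
  · have hslice : Prod.mk x ⁻¹' HT = ∅ := by ext y; simp [HT, hx]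
    simp [hslice, hx]

theorem setIntegral_HT_comp_fst {E : Type*} [NormedAddCommGroup E] [NormedSpace ℝ E] {G : ℂ → E}
    (hG : AEStronglyMeasurable G volume) :
    ∫ z in HT, G z.1 = ∫ x in ball (0 : ℂ) 1, (π * ‖x‖ ^ 2) • G x := by
  have hmap := map_fst_restrict_HT
  rw [← integral_map measurable_fst.aemeasurable, hmap,
    integral_withDensity_eq_integral_smul (by fun_prop)]
  · simp [NNReal.smul_def]
  · rw [hmap]
    exact hG.mono_ac
      (withDensity_absolutelyContinuous _ _ |>.trans Measure.absolutelyContinuous_restrict)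

theorem KH_apply_mk_zero (z : ℂ × ℂ) (w : ℂ) :
    KH z (w, 0) = ((π : ℂ) ^ 2 * (z.1 * conj w) * (1 - z.1 * conj w) ^ 2)⁻¹ := by
  by_cases hu : z.1 * conj w = 0
  · simp [KH, hu]
  · simp only [KH, map_zero, mul_zero, sub_zero]
    field_simp

theorem sqrt_re_KH_ofReal_diag (a : ℝ) :
    √(KH (a, 0) (a, 0)).re = |π * a * (1 - a ^ 2)|⁻¹ := by
  have hdiag : KH (a, 0) (a, 0) = (((π * a * (1 - a ^ 2)) ^ 2)⁻¹ : ℝ) := by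
    rw [KH_apply_mk_zero, Complex.conj_ofReal]
    push_cast
    ring
  rw [hdiag, Complex.ofReal_re, Real.sqrt_inv, Real.sqrt_sq_eq_abs]

theorem smul_inv_mul_conj_KH_normalized {a : ℝ} (ha0 : 0 < a) (ha1 : a < 1) {x : ℂ}
    (hx : x ≠ 0) :
    (π * ‖x‖ ^ 2) • (x⁻¹ * conj (KH (x, 0) (a, 0) / √(KH (a, 0) (a, 0)).re)) =
      (1 - (a : ℂ) ^ 2) * conj ((1 - a * x) ^ 2)⁻¹ := by
  have hpos : 0 < π * a * (1 - a ^ 2) := by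
    have : 0 < 1 - a ^ 2 := by nlinarith
    positivity
  have hx' : conj x ≠ 0 := (map_ne_zero _).mpr hx
  have ha' : (a : ℂ) ≠ 0 := by exact_mod_cast ha0.ne'
  have hπ : (π : ℂ) ≠ 0 := by exact_mod_cast Real.pi_ne_zero
  rw [sqrt_re_KH_ofReal_diag, abs_of_pos hpos]
  simp only [KH_apply_mk_zero, map_div₀, map_inv₀, map_mul, map_pow, map_sub, map_one,
    Complex.conj_ofReal, Complex.real_smul]
  push_cast
  rw [← Complex.mul_conj', mul_comm (a : ℂ) (conj x)]
  field_simp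

theorem setIntegral_HT_inv_fst_mul_conj_KH_normalized {a : ℝ} (ha0 : 0 < a) (ha1 : a < 1) :
    ∫ z in HT, z.1⁻¹ * conj (KH z (a, 0) / √(KH (a, 0) (a, 0)).re) =
      ((π * (1 - a ^ 2) : ℝ) : ℂ) := by
  set G : ℂ → ℂ := fun x => x⁻¹ * conj (KH (x, 0) (a, 0) / √(KH (a, 0) (a, 0)).re)
  have hG : Measurable G := by
    simp only [G, KH_apply_mk_zero]
    fun_prop
  calc ∫ z in HT, z.1⁻¹ * conj (KH z (a, 0) / √(KH (a, 0) (a, 0)).re)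
      = ∫ z in HT, G z.1 := by simp only [G, KH_apply_mk_zero]
    _ = ∫ x in ball (0 : ℂ) 1, (π * ‖x‖ ^ 2) • G x :=
        setIntegral_HT_comp_fst hG.aestronglyMeasurable
    _ = ∫ x in ball (0 : ℂ) 1, (1 - (a : ℂ) ^ 2) * conj ((1 - a * x) ^ 2)⁻¹ :=
        setIntegral_congr_ae measurableSet_ball <| by
          filter_upwards [Measure.ae_ne volume 0] with x hx _ using
            smul_inv_mul_conj_KH_normalized ha0 ha1 hx
    _ = ((π * (1 - a ^ 2) : ℝ) : ℂ) := by
        rw [integral_const_mul, integral_conj,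
          setIntegral_ball_inv_one_sub_mul_sq (by simpa [abs_of_pos ha0]), Complex.conj_ofReal]
        push_cast
        ring

theorem pairing_eq {j : ℕ} (hj : 2 ≤ j) :
    pairing j = ((π * (1 - 1 / (j : ℝ) ^ 2) : ℝ) : ℂ) := by
  have hj' : (2 : ℝ) ≤ j := by exact_mod_cast hj
  have hcast : 1 / (j : ℂ) = ((1 / j : ℝ) : ℂ) := by push_cast; rfl
  rw [pairing, hcast, setIntegral_HT_inv_fst_mul_conj_KH_normalized (by positivity)
    (by rw [div_lt_one] <;> linarith), div_pow, one_pow]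

theorem stmt19 :
    (∀ j : ℕ, 2 ≤ j → ‖pairing j‖ = Real.pi * (1 - 1 / (j : ℝ) ^ 2))
    ∧ Tendsto (fun j : ℕ => Real.pi * (1 - 1 / (j : ℝ) ^ 2)) atTop (nhds Real.pi)
    ∧ Real.pi ≠ 0
    ∧ ¬ Tendsto pairing atTop (nhds 0) := by
  have hnorm : ∀ j : ℕ, 2 ≤ j → ‖pairing j‖ = π * (1 - 1 / (j : ℝ) ^ 2) := fun j hj => by
    have hj' : (1 : ℝ) ≤ (j : ℝ) ^ 2 := one_le_pow₀ (by exact_mod_cast (by omega : 1 ≤ j))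
    rw [pairing_eq hj, Complex.norm_real, Real.norm_of_nonneg]
    exact mul_nonneg Real.pi_pos.le (sub_nonneg.mpr (div_le_one_of_le₀ hj' (by positivity)))
  have hlim : Tendsto (fun j : ℕ => π * (1 - 1 / (j : ℝ) ^ 2)) atTop (nhds π) := by
    simpa using ((tendsto_one_div_atTop_nhds_zero_nat.pow 2).const_sub 1).const_mul π
  refine ⟨hnorm, hlim, Real.pi_ne_zero, fun hzero => Real.pi_ne_zero ?_⟩
  refine tendsto_nhds_unique (hzero.norm.congr' ?_) hlim |>.symm.trans norm_zero
  filter_upwards [eventually_ge_atTop 2] with j hj using hnorm j hj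
end
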